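/- arXiv:2507.12303 — 2 statements merged into one kernel-verified Lean document; each statement's English description precedes it below -/
import Mathlib

section
/- Let U⊆V be finite and suppose u and v are both solutions on Ū×[0,T) (with u(x,·),v(x,·)∈C¹ for x∈U) of the Dirichlet problem u_t = Δ_p|_U u + σ(x,t)f(u) in U×(0,T), u=0 on ∂U×[0,T), u(·,0)=u0 on U. Then u ≡ v on Ū×[0,T). -/
open scoped ENNReal
open Classical Filter Set

/-- The weighted degree `μ(x) = ∑_{y ∼ x} ω(x,y)` of a vertex of a locally finite
weighted graph (non-neighbours contribute `ω(x,y) = 0`). -/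
noncomputable def graphMu {V : Type*} (ω : V → V → ℝ) (x : V) : ℝ := ∑' y, ω x y

/-- The graph `p`-Laplacian
`Δ_p f(x) = (1/μ(x)) ∑_{y ∼ x} ω(x,y) |f(y) - f(x)|^{p-2} (f(y) - f(x))`. -/
noncomputable def pLap {V : Type*} (ω : V → V → ℝ) (p : ℝ) (f : V → ℝ) (x : V) : ℝ :=
  (graphMu ω x)⁻¹ * ∑' y, ω x y * |f y - f x| ^ (p - 2) * (f y - f x)

/-- The (outer vertex) boundary of `U`: vertices outside `U` adjacent to some vertex of `U`. -/
def bdry {V : Type*} (ω : V → V → ℝ) (U : Set V) : Set V :=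
  {x | x ∉ U ∧ ∃ y ∈ U, 0 < ω x y}

/-- `Ū = U ∪ ∂U`. -/
def vclosure {V : Type*} (ω : V → V → ℝ) (U : Set V) : Set V := U ∪ bdry ω U

/-- The time interval `[0,T)` for an extended-real time horizon `T ∈ (0,∞]`. -/
def ITv (T : ℝ≥0∞) : Set ℝ := {t : ℝ | 0 ≤ t ∧ ENNReal.ofReal t < T}

/-- A solution on `Ū × [0,T)` of the Dirichlet problem
`u_t = Δ_p|_U u + σ(x,t) f(u)` in `U × (0,T)`, `u = 0` on `∂U × [0,T)`, `u(·,0) = u0` on `U`.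
(For `x ∈ U` all neighbours of `x` lie in `Ū`, so `Δ_p` coincides with `Δ_p|_U` there.) -/
def IsDirichletSol {V : Type*} (ω : V → V → ℝ) (p : ℝ) (σ : V → ℝ → ℝ) (f : ℝ → ℝ)
    (u0 : V → ℝ) (U : Set V) (T : ℝ≥0∞) (u : V → ℝ → ℝ) : Prop :=
  (∀ x ∈ U, ContDiffOn ℝ 1 (u x) (ITv T)) ∧
  (∀ x ∈ U, ∀ t ∈ ITv T, 0 < t →
    derivWithin (u x) (ITv T) t = pLap ω p (fun y => u y t) x + σ x t * f (u x t)) ∧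
  (∀ x ∈ bdry ω U, ∀ t ∈ ITv T, u x t = 0) ∧
  (∀ x ∈ U, u x 0 = u0 x)

/-! The difference `w = u - v` vanishes on `∂U` and at `t = 0`. On a compact time interval
`[0, t₀]` both solutions are bounded, so `z ↦ |z|^{p-2} z` (whose derivative is
`(p-1)|z|^{p-2}`) and `f` are Lipschitz on the relevant range, and `σ` is bounded. Since `Δ_p`
at `x ∈ U` is a weighted average over neighbours, which lie in `Ū`, this gives
`‖w'(t)‖ ≤ C ‖w(t)‖` in the sup norm over the finite set `U`, and Grönwall's inequality forces
`w = 0`. -/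

open scoped Topology NNReal

theorem hasDerivAt_abs_rpow_sub_two_mul {p : ℝ} (hp : 2 < p) (s : ℝ) :
    HasDerivAt (fun z : ℝ => |z| ^ (p - 2) * z) ((p - 1) * |s| ^ (p - 2)) s := by
  have hp2 : 0 < p - 2 := by linarith
  rcases eq_or_ne s 0 with rfl | hs
  · have hzero : |(0 : ℝ)| ^ (p - 2) = 0 := by rw [abs_zero, Real.zero_rpow hp2.ne']
    rw [hzero, mul_zero, hasDerivAt_iff_tendsto_slope]
    have hcont : Tendsto (fun z : ℝ => |z| ^ (p - 2)) (𝓝 0) (𝓝 0) := by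
      simpa [Real.zero_rpow hp2.ne'] using
        (continuous_abs.rpow_const fun _ => Or.inr hp2.le).tendsto (0 : ℝ)
    refine (hcont.mono_left nhdsWithin_le_nhds).congr' ?_
    filter_upwards [self_mem_nhdsWithin] with z (hz : z ≠ 0)
    rw [slope_def_field]
    field_simp
    simp
  · have habs : |s| ≠ 0 := abs_ne_zero.2 hs
    have hpow : |s| ^ (p - 2 - 1) * |s| = |s| ^ (p - 2) := by
      rw [← Real.rpow_add_one habs]
      norm_num
    refine (((Real.hasDerivAt_rpow_const (Or.inl habs)).comp s (hasDerivAt_abs hs)).mul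
      (hasDerivAt_id s)).congr_deriv ?_
    rw [id_eq, mul_one, Function.comp_apply, mul_assoc _ _ s, sign_mul_self, mul_assoc, hpow]
    ring

theorem abs_abs_rpow_sub_two_mul_sub_le {p M a b : ℝ} (hp : 2 < p) (ha : |a| ≤ M)
    (hb : |b| ≤ M) :
    |(|a| ^ (p - 2) * a) - (|b| ^ (p - 2) * b)| ≤ (p - 1) * M ^ (p - 2) * |a - b| := by
  have hderiv_le : ∀ z ∈ Icc (-M) M, ‖(p - 1) * |z| ^ (p - 2)‖ ≤ (p - 1) * M ^ (p - 2) := by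
    intro z hz
    have hp1 : 0 ≤ p - 1 := by linarith
    rw [Real.norm_eq_abs, abs_of_nonneg (mul_nonneg hp1 (Real.rpow_nonneg (abs_nonneg z) _))]
    exact mul_le_mul_of_nonneg_left
      (Real.rpow_le_rpow (abs_nonneg z) (abs_le.2 hz) (by linarith)) hp1
  simpa only [Real.norm_eq_abs] using
    (convex_Icc (-M) M).norm_image_sub_le_of_norm_hasDerivWithin_le
      (fun z _ => (hasDerivAt_abs_rpow_sub_two_mul hp z).hasDerivWithinAt) hderiv_le
      (abs_le.1 hb) (abs_le.1 ha)

theorem eq_zero_of_norm_deriv_right_le_mul_norm_Ioo {E : Type*} [NormedAddCommGroup E]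
    [NormedSpace ℝ E] {w w' : ℝ → E} {K a b : ℝ} (hab : a ≤ b) (hcont : ContinuousOn w (Icc a b))
    (hwa : w a = 0) (hderiv : ∀ r ∈ Ioo a b, HasDerivWithinAt w (w' r) (Ici r) r)
    (hbound : ∀ r ∈ Ioo a b, ‖w' r‖ ≤ K * ‖w r‖) : w b = 0 := by
  rcases hab.eq_or_lt with rfl | hab
  · exact hwa
  have hgronwall : ∀ s ∈ Ioc a b, ‖w b‖ ≤ ‖w s‖ * Real.exp (K * (b - s)) := fun s hs => by
    simpa only [gronwallBound_ε0] using norm_le_gronwallBound_of_norm_deriv_right_le (ε := 0)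
      (hcont.mono (Icc_subset_Icc_left hs.1.le))
      (fun r hr => hderiv r ⟨hs.1.trans_le hr.1, hr.2⟩) le_rfl
      (fun r hr => (hbound r ⟨hs.1.trans_le hr.1, hr.2⟩).trans_eq (add_zero _).symm) b
      ⟨hs.2, le_rfl⟩
  have hw : Tendsto w (𝓝[>] a) (𝓝 0) :=
    hwa ▸ (hcont a ⟨le_rfl, hab.le⟩).tendsto.mono_left
      (nhdsWithin_le_of_mem (mem_of_superset (Ioc_mem_nhdsGT hab) Ioc_subset_Icc_self))
  have hlim : Tendsto (fun s => ‖w s‖ * Real.exp (K * (b - s))) (𝓝[>] a) (𝓝 0) := by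
    simpa using hw.norm.mul ((by fun_prop : Continuous fun s => Real.exp (K * (b - s))).tendsto
      a |>.mono_left nhdsWithin_le_nhds)
  exact norm_le_zero_iff.1 (ge_of_tendsto hlim (eventually_of_mem (Ioc_mem_nhdsGT hab) hgronwall))

theorem Set.Finite.exists_abs_le_of_continuousOn {ι : Type*} {U : Set ι} (hU : U.Finite)
    {g : ι → ℝ → ℝ} {a b : ℝ} (hg : ∀ x ∈ U, ContinuousOn (g x) (Icc a b)) :
    ∃ R, 0 ≤ R ∧ ∀ x ∈ U, ∀ t ∈ Icc a b, |g x t| ≤ R := by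
  have := hU.fintype
  obtain ⟨R, hR⟩ := isCompact_Icc.exists_bound_of_continuousOn
    (f := fun t (x : U) => g x t) (continuousOn_pi.2 fun x => hg x x.2)
  exact ⟨max R 0, le_max_right _ _, fun x hx t ht =>
    ((norm_le_pi_norm (fun x : U => g x t) ⟨x, hx⟩).trans (hR t ht)).trans (le_max_left _ _)⟩

section pLaplacian

variable {V : Type*} {ω : V → V → ℝ} {x : V}

theorem pLap_eq_sum (hlf : (Function.support (ω x)).Finite) (p : ℝ) (g : V → ℝ) :
    pLap ω p g x = (∑ y ∈ hlf.toFinset, ω x y)⁻¹ *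
      ∑ y ∈ hlf.toFinset, ω x y * (|g y - g x| ^ (p - 2) * (g y - g x)) := by
  rw [pLap, graphMu, tsum_eq_sum' hlf.coe_toFinset.superset, tsum_eq_sum' (s := hlf.toFinset)]
  · simp only [mul_assoc]
  · rw [hlf.coe_toFinset]
    exact (Function.support_mul_subset_left _ _).trans (Function.support_mul_subset_left _ _)

theorem abs_pLap_sub_pLap_le (hnonneg : ∀ y, 0 ≤ ω x y) (hlf : (Function.support (ω x)).Finite)
    {p : ℝ} (hp : 2 < p) {g h : V → ℝ} {R D : ℝ} (hR : 0 ≤ R) (hD : 0 ≤ D)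
    (hg : ∀ y, ω x y ≠ 0 → |g y - g x| ≤ R) (hh : ∀ y, ω x y ≠ 0 → |h y - h x| ≤ R)
    (hgh : ∀ y, ω x y ≠ 0 → |(g y - g x) - (h y - h x)| ≤ D) :
    |pLap ω p g x - pLap ω p h x| ≤ (p - 1) * R ^ (p - 2) * D := by
  set S := hlf.toFinset
  set c := (p - 1) * R ^ (p - 2) * D
  have hK : 0 ≤ (p - 1) * R ^ (p - 2) := mul_nonneg (by linarith) (Real.rpow_nonneg hR _)
  have hc : 0 ≤ c := mul_nonneg hK hD
  have hμ : 0 ≤ ∑ y ∈ S, ω x y := Finset.sum_nonneg fun y _ => hnonneg y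
  have hterm : ∀ y ∈ S, |ω x y * (|g y - g x| ^ (p - 2) * (g y - g x)) -
      ω x y * (|h y - h x| ^ (p - 2) * (h y - h x))| ≤ ω x y * c := by
    intro y hy
    have hy : ω x y ≠ 0 := hlf.mem_toFinset.1 hy
    rw [← mul_sub, abs_mul, abs_of_nonneg (hnonneg y)]
    exact mul_le_mul_of_nonneg_left ((abs_abs_rpow_sub_two_mul_sub_le hp (hg y hy) (hh y hy)).trans
      (mul_le_mul_of_nonneg_left (hgh y hy) hK)) (hnonneg y)
  rw [pLap_eq_sum hlf, pLap_eq_sum hlf, ← mul_sub, ← Finset.sum_sub_distrib, abs_mul,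
    abs_inv, abs_of_nonneg hμ]
  calc (∑ y ∈ S, ω x y)⁻¹ * |∑ y ∈ S, (ω x y * (|g y - g x| ^ (p - 2) * (g y - g x)) -
        ω x y * (|h y - h x| ^ (p - 2) * (h y - h x)))|
      ≤ (∑ y ∈ S, ω x y)⁻¹ * ((∑ y ∈ S, ω x y) * c) := by
        rw [Finset.sum_mul]
        exact mul_le_mul_of_nonneg_left ((Finset.abs_sum_le_sum_abs _ _).trans
          (Finset.sum_le_sum hterm)) (inv_nonneg.2 hμ)
    _ ≤ c := by
        rw [← mul_assoc]
        rcases hμ.eq_or_lt with hμ0 | hμ0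
        · simp [← hμ0, hc]
        · rw [inv_mul_cancel₀ hμ0.ne', one_mul]

theorem mem_vclosure_of_ne_zero (hsymm : ∀ x y, ω x y = ω y x) (hnonneg : ∀ x y, 0 ≤ ω x y)
    {U : Set V} {y : V} (hx : x ∈ U) (hxy : ω x y ≠ 0) : y ∈ vclosure ω U := by
  by_cases hy : y ∈ U
  · exact Or.inl hy
  · exact Or.inr ⟨hy, x, hx, (hnonneg y x).lt_of_ne (hsymm x y ▸ hxy).symm⟩

theorem abs_pLap_add_mul_sub_le (hsymm : ∀ x y, ω x y = ω y x) (hnonneg : ∀ x y, 0 ≤ ω x y)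
    (hlf : ∀ x, (Function.support (ω x)).Finite) {p : ℝ} (hp : 2 < p) {f : ℝ → ℝ} {U : Set V}
    (hx : x ∈ U) {g h : V → ℝ} {R D S s : ℝ} {L : ℝ≥0} (hR : 0 ≤ R) (hD : 0 ≤ D)
    (hg : ∀ y ∈ vclosure ω U, |g y| ≤ R) (hh : ∀ y ∈ vclosure ω U, |h y| ≤ R)
    (hgh : ∀ y ∈ vclosure ω U, |g y - h y| ≤ D) (hs : |s| ≤ S)
    (hf : LipschitzOnWith L f (Icc (-R) R)) :
    |(pLap ω p g x + s * f (g x)) - (pLap ω p h x + s * f (h x))| ≤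
      ((p - 1) * (2 * R) ^ (p - 2) * 2 + S * L) * D := by
  have hxU : x ∈ vclosure ω U := Or.inl hx
  have hincr : ∀ k : V → ℝ, (∀ y ∈ vclosure ω U, |k y| ≤ R) →
      ∀ y, ω x y ≠ 0 → |k y - k x| ≤ 2 * R := fun k hk y hy => by
    linarith [abs_sub (k y) (k x), hk y (mem_vclosure_of_ne_zero hsymm hnonneg hx hy), hk x hxU]
  have hlap := abs_pLap_sub_pLap_le (R := 2 * R) (D := 2 * D) (hnonneg x) (hlf x) hp
    (by positivity) (by positivity) (hincr g hg) (hincr h hh) fun y hy => by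
      have := abs_sub (g y - h y) (g x - h x)
      rw [show g y - h y - (g x - h x) = g y - g x - (h y - h x) by ring] at this
      linarith [hgh y (mem_vclosure_of_ne_zero hsymm hnonneg hx hy), hgh x hxU]
  have hreact : |s * (f (g x) - f (h x))| ≤ S * L * D := by
    have hlip := hf.dist_le_mul (g x) (abs_le.1 (hg x hxU)) (h x) (abs_le.1 (hh x hxU))
    rw [Real.dist_eq, Real.dist_eq] at hlip
    rw [abs_mul, mul_assoc]
    exact mul_le_mul hs (hlip.trans (mul_le_mul_of_nonneg_left (hgh x hxU) L.2)) (abs_nonneg _)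
      ((abs_nonneg s).trans hs)
  calc |(pLap ω p g x + s * f (g x)) - (pLap ω p h x + s * f (h x))|
      = |(pLap ω p g x - pLap ω p h x) + s * (f (g x) - f (h x))| := by ring_nf
    _ ≤ (p - 1) * (2 * R) ^ (p - 2) * (2 * D) + S * L * D :=
        (abs_add_le _ _).trans (add_le_add hlap hreact)
    _ = ((p - 1) * (2 * R) ^ (p - 2) * 2 + S * L) * D := by ring

end pLaplacian

theorem Icc_subset_ITv {T : ℝ≥0∞} {t₀ : ℝ} (ht₀ : t₀ ∈ ITv T) : Icc 0 t₀ ⊆ ITv T :=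
  fun _ ht => ⟨ht.1, (ENNReal.ofReal_le_ofReal ht.2).trans_lt ht₀.2⟩

namespace IsDirichletSol

variable {V : Type*} {ω : V → V → ℝ} {p : ℝ} {σ : V → ℝ → ℝ} {f : ℝ → ℝ} {u0 : V → ℝ}
  {U : Set V} {T : ℝ≥0∞} {u v : V → ℝ → ℝ} {t₀ : ℝ}

theorem hasDerivWithinAt (hu : IsDirichletSol ω p σ f u0 U T u) {x : V} (hx : x ∈ U)
    (ht₀ : t₀ ∈ ITv T) {t : ℝ} (ht : t ∈ Ico 0 t₀) :
    HasDerivWithinAt (u x) (derivWithin (u x) (ITv T) t) (Ici t) t :=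
  ((hu.1 x hx).differentiableOn one_ne_zero t (Icc_subset_ITv ht₀ (Ico_subset_Icc_self ht))
    ).hasDerivWithinAt.mono_of_mem_nhdsWithin <| mem_of_superset (Ico_mem_nhdsGE ht.2)
      fun _ hr => Icc_subset_ITv ht₀ ⟨ht.1.trans hr.1, hr.2.le⟩

theorem exists_abs_le (hu : IsDirichletSol ω p σ f u0 U T u) (hU : U.Finite)
    (ht₀ : t₀ ∈ ITv T) : ∃ R, 0 ≤ R ∧ ∀ y ∈ vclosure ω U, ∀ t ∈ Icc 0 t₀, |u y t| ≤ R := by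
  obtain ⟨R, hR, hbound⟩ := hU.exists_abs_le_of_continuousOn
    fun x hx => (hu.1 x hx).continuousOn.mono (Icc_subset_ITv ht₀)
  refine ⟨R, hR, ?_⟩
  rintro y (hy | hy) t ht
  · exact hbound y hy t ht
  · rwa [hu.2.2.1 y hy t (Icc_subset_ITv ht₀ ht), abs_zero]

theorem apply_eq_of_mem (hsymm : ∀ x y, ω x y = ω y x) (hnonneg : ∀ x y, 0 ≤ ω x y)
    (hlf : ∀ x, (Function.support (ω x)).Finite) (hp : 2 < p) (hU : U.Finite)
    (hσ : ∀ x, ContinuousOn (σ x) (Ici 0)) (hf : LocallyLipschitz f)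
    (hu : IsDirichletSol ω p σ f u0 U T u) (hv : IsDirichletSol ω p σ f u0 U T v)
    (ht₀ : t₀ ∈ ITv T) {x : V} (hx : x ∈ U) : u x t₀ = v x t₀ := by
  have := hU.fintype
  let w : ℝ → U → ℝ := fun t y => u y t - v y t
  have hI := Icc_subset_ITv ht₀
  obtain ⟨Ru, hRu, hu_le⟩ := hu.exists_abs_le hU ht₀
  obtain ⟨Rv, -, hv_le⟩ := hv.exists_abs_le hU ht₀
  obtain ⟨S, hS, hσ_le⟩ := hU.exists_abs_le_of_continuousOn (g := σ) (a := 0) (b := t₀)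
    fun x _ => (hσ x).mono fun _ ht => ht.1
  set R := max Ru Rv
  obtain ⟨L, hL⟩ := hf.locallyLipschitzOn.exists_lipschitzOnWith_of_compact
    (isCompact_Icc (a := -R) (b := R))
  set C := (p - 1) * (2 * R) ^ (p - 2) * 2 + S * L
  have hC : 0 ≤ C := by
    have := Real.rpow_nonneg (by positivity : (0 : ℝ) ≤ 2 * R) (p - 2)
    have : 0 ≤ p - 1 := by linarith
    positivity
  have hw_le : ∀ t ∈ ITv T, ∀ y ∈ vclosure ω U, |u y t - v y t| ≤ ‖w t‖ := by
    rintro t ht y (hy | hy)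
    · exact norm_le_pi_norm (w t) ⟨y, hy⟩
    · rw [hu.2.2.1 y hy t ht, hv.2.2.1 y hy t ht, sub_self, abs_zero]
      exact norm_nonneg _
  have hw : w t₀ = 0 := by
    refine eq_zero_of_norm_deriv_right_le_mul_norm_Ioo (K := C) ht₀.1
      (continuousOn_pi.2 fun y =>
        ((hu.1 y y.2).continuousOn.sub (hv.1 y y.2).continuousOn).mono hI)
      (funext fun y => by simp [w, hu.2.2.2 y y.2, hv.2.2.2 y y.2])
      (fun r hr => hasDerivWithinAt_pi.2 fun y =>
        (hu.hasDerivWithinAt y.2 ht₀ ⟨hr.1.le, hr.2⟩).sub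
          (hv.hasDerivWithinAt y.2 ht₀ ⟨hr.1.le, hr.2⟩))
      fun r hr => (pi_norm_le_iff_of_nonneg (by positivity)).2 fun y => ?_
    have hr' : r ∈ Icc 0 t₀ := Ioo_subset_Icc_self hr
    rw [Real.norm_eq_abs, hu.2.1 y y.2 r (hI hr') hr.1, hv.2.1 y y.2 r (hI hr') hr.1]
    exact abs_pLap_add_mul_sub_le hsymm hnonneg hlf hp y.2 (le_max_of_le_left hRu) (norm_nonneg _)
      (fun z hz => (hu_le z hz r hr').trans (le_max_left _ _))
      (fun z hz => (hv_le z hz r hr').trans (le_max_right _ _))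
      (hw_le r (hI hr')) (hσ_le y y.2 r hr') hL
  simpa [w, sub_eq_zero] using congrFun hw ⟨x, hx⟩

end IsDirichletSol

theorem uniqueness_dirichlet_general
    {V : Type*} (ω : V → V → ℝ)
    (hsymm : ∀ x y, ω x y = ω y x)
    (hnonneg : ∀ x y, 0 ≤ ω x y)
    (hlf : ∀ x, (Function.support (ω x)).Finite)
    (p : ℝ) (hp : 2 < p)
    (U : Set V) (hUfin : U.Finite)
    (T : ℝ≥0∞)
    (σ : V → ℝ → ℝ)
    (hσcont : ∀ x, ContinuousOn (σ x) (Set.Ici 0))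
    (f : ℝ → ℝ) (hf : LocallyLipschitz f)
    (u0 : V → ℝ)
    (u v : V → ℝ → ℝ)
    (hu : IsDirichletSol ω p σ f u0 U T u)
    (hv : IsDirichletSol ω p σ f u0 U T v) :
    ∀ x ∈ vclosure ω U, ∀ t ∈ ITv T, u x t = v x t := by
  rintro x (hx | hx) t ht
  · exact hu.apply_eq_of_mem hsymm hnonneg hlf hp hUfin hσcont hf hv ht hx
  · rw [hu.2.2.1 x hx t ht, hv.2.2.1 x hx t ht]

/-- uniqueness: two solutions on `Ū × [0,T)` of the Dirichlet problem
`u_t = Δ_p|_U u + σ(x,t) f(u)` in `U × (0,T)`, `u = 0` on `∂U × [0,T)`, `u(·,0) = u0`,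
coincide on `Ū × [0,T)`. -/
theorem uniqueness_dirichlet
    {V : Type*} (ω : V → V → ℝ)
    (hsymm : ∀ x y, ω x y = ω y x)
    (hnonneg : ∀ x y, 0 ≤ ω x y)
    (hloop : ∀ x, ω x x = 0)
    (hlf : ∀ x, (Function.support (ω x)).Finite)
    (hconn : ∀ x y, Relation.ReflTransGen (fun a b => 0 < ω a b) x y)
    (p : ℝ) (hp : 2 < p)
    (U : Set V) (hUfin : U.Finite)
    (T : ℝ≥0∞) (hT : 0 < T)
    (σ : V → ℝ → ℝ)
    (hσpos : ∀ x t, 0 ≤ t → 0 < σ x t)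
    (hσcont : ∀ x, ContinuousOn (σ x) (Set.Ici 0))
    (f : ℝ → ℝ) (hf : LocallyLipschitz f) (hf0 : f 0 = 0)
    (u0 : V → ℝ) (hu0nn : ∀ x, 0 ≤ u0 x) (hu0bd : ∃ M, ∀ x, u0 x ≤ M)
    (u v : V → ℝ → ℝ)
    (hu : IsDirichletSol ω p σ f u0 U T u)
    (hv : IsDirichletSol ω p σ f u0 U T v) :
    ∀ x ∈ vclosure ω U, ∀ t ∈ ITv T, u x t = v x t :=
  uniqueness_dirichlet_general ω hsymm hnonneg hlf p hp U hUfin T σ hσcont f hf u0 u v hu hv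
end

section
/- Let p>2 and suppose u0(x0)>0 for some vertex x0∈V and δ:=inf_{t≥0}σ(x0,t)>0. If for some fixed ε>0 one has f(s) ≥ (1/δ + ε)·s^{p−1} for all s ≥ 0, then the equation u_t(x,t) − Δ_p u(x,t) = σ(x,t)f(u(x,t)) on V×(0,∞), u(x,0)=u0(x), admits no nonnegative solution u defined for all t ≥ 0 with u(x,·) continuously differentiable on [0,∞) for every x∈V; every nonnegative solution of the equation blows up in finite time. -/
open scoped ENNReal
open Classical Filter Set

/-!
Put `h = u(x₀, ·)`. Every difference `u(y) - u(x₀)` is at least `-u(x₀)`, so the `p`-Laplacian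
of the nonnegative function `u(·, t)` at `x₀` is at least `-h^{p-1}`, while
`σ f(u) ≥ δ (1/δ + ε) h^{p-1}`. Hence `h' ≥ δε h^{p-1}` with `h(0) > 0`, so `h` is positive and
`h^{2-p} + δε (p-2) t` is nonincreasing; being positive, it cannot stay below `h(0)^{2-p}` for
`t > h(0)^{2-p} / (δε (p-2))`.
-/

open Real in
lemma neg_rpow_sub_one_le_abs_rpow_sub_two_mul {p a b : ℝ} (hp : 1 ≤ p) (hb : 0 ≤ b)
    (hab : -b ≤ a) : -b ^ (p - 1) ≤ |a| ^ (p - 2) * a := by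
  rcases le_or_gt 0 a with ha | ha
  · have : 0 ≤ |a| ^ (p - 2) * a := mul_nonneg (rpow_nonneg (abs_nonneg a) _) ha
    linarith [rpow_nonneg hb (p - 1)]
  · have hna : 0 < -a := neg_pos.2 ha
    have hodd : |a| ^ (p - 2) * a = -(-a) ^ (p - 1) := by
      rw [abs_of_neg ha, show p - 1 = (p - 2) + 1 by ring, rpow_add hna, rpow_one]
      ring
    rw [hodd, neg_le_neg_iff]
    exact rpow_le_rpow hna.le (by linarith) (by linarith)

lemma neg_rpow_le_pLap {V : Type*} {ω : V → V → ℝ} {p : ℝ} {g : V → ℝ} {x : V}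
    (hω : ∀ y, 0 ≤ ω x y) (hp : 1 ≤ p) (hg : ∀ y, 0 ≤ g y) :
    -g x ^ (p - 1) ≤ pLap ω p g x := by
  set c := g x ^ (p - 1)
  set S := ∑' y, ω x y * |g y - g x| ^ (p - 2) * (g y - g x)
  have hc : 0 ≤ c := Real.rpow_nonneg (hg x) _
  rcases (show 0 ≤ graphMu ω x from tsum_nonneg hω).eq_or_lt with hμ | hμ
  · -- `pLap` vanishes here since `0⁻¹ = 0`
    simpa [pLap, ← hμ] using hc
  have hΩ : Summable (ω x) := by
    by_contra hΩ
    simp [graphMu, tsum_eq_zero_of_not_summable hΩ] at hμ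
  have hS : -c * graphMu ω x ≤ S := by
    by_cases hsum : Summable fun y => ω x y * |g y - g x| ^ (p - 2) * (g y - g x)
    · rw [graphMu, mul_comm, ← tsum_mul_right]
      refine (hΩ.mul_right _).tsum_le_tsum (fun y => ?_) hsum
      rw [mul_assoc]
      exact mul_le_mul_of_nonneg_left
        (neg_rpow_sub_one_le_abs_rpow_sub_two_mul hp (hg x) (by linarith [hg y])) (hω y)
    · rw [show S = 0 from tsum_eq_zero_of_not_summable hsum]
      exact mul_nonpos_of_nonpos_of_nonneg (neg_nonpos.2 hc) hμ.le
  calc -c = (graphMu ω x)⁻¹ * (-c * graphMu ω x) := by field_simp [hμ.ne']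
    _ ≤ pLap ω p g x := mul_le_mul_of_nonneg_left hS (inv_nonneg.2 hμ.le)

lemma antitoneOn_rpow_two_sub_add_mul {h h' : ℝ → ℝ} {K p : ℝ} (hp : 2 ≤ p)
    (hcont : ContinuousOn h (Ici 0)) (hpos : ∀ t, 0 ≤ t → 0 < h t)
    (hderiv : ∀ t, 0 < t → HasDerivAt h (h' t) t)
    (hgrowth : ∀ t, 0 < t → K * h t ^ (p - 1) ≤ h' t) :
    AntitoneOn (fun t => h t ^ (2 - p) + K * (p - 2) * t) (Ici 0) := by
  refine antitoneOn_of_hasDerivWithinAt_nonpos (convex_Ici 0)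
    (f' := fun t => h' t * (2 - p) * h t ^ (1 - p) + K * (p - 2)) ?_ (fun t ht => ?_)
    (fun t ht => ?_)
  · exact ((hcont.rpow_const fun t ht => Or.inl (hpos t ht).ne').add (by fun_prop))
  · rw [interior_Ici] at ht
    have := ((hderiv t ht).rpow_const (p := 2 - p) (Or.inl (hpos t ht.le).ne')).add
      ((hasDerivAt_id t).const_mul (K * (p - 2)))
    exact (this.congr_deriv (by ring_nf)).hasDerivWithinAt
  · rw [interior_Ici] at ht
    have hht := hpos t ht.le
    have hcancel : h t ^ (p - 1) * h t ^ (1 - p) = 1 := by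
      rw [← Real.rpow_add hht]; norm_num
    have hK : K ≤ h' t * h t ^ (1 - p) := by
      have := mul_le_mul_of_nonneg_right (hgrowth t ht) (Real.rpow_nonneg hht.le (1 - p))
      rwa [mul_assoc, hcancel, mul_one] at this
    nlinarith

theorem false_of_rpow_le_hasDerivAt {h h' : ℝ → ℝ} {K p : ℝ} (hp : 2 < p) (hK : 0 < K)
    (hcont : ContinuousOn h (Ici 0)) (hnonneg : ∀ t, 0 ≤ t → 0 ≤ h t) (hh0 : 0 < h 0)
    (hderiv : ∀ t, 0 < t → HasDerivAt h (h' t) t)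
    (hgrowth : ∀ t, 0 < t → K * h t ^ (p - 1) ≤ h' t) : False := by
  have hmono : MonotoneOn h (Ici 0) := by
    refine monotoneOn_of_hasDerivWithinAt_nonneg (convex_Ici 0) (f' := h') hcont
      (fun t ht => ?_) (fun t ht => ?_) <;> rw [interior_Ici] at ht
    · exact (hderiv t ht).hasDerivWithinAt
    · exact (mul_nonneg hK.le (Real.rpow_nonneg (hnonneg t ht.le) _)).trans (hgrowth t ht)
  have hpos : ∀ t, 0 ≤ t → 0 < h t := fun t ht => hh0.trans_le (hmono self_mem_Ici ht ht)
  have hanti := antitoneOn_rpow_two_sub_add_mul hp.le hcont hpos hderiv hgrowth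
  set T := (h 0 ^ (2 - p) + 1) / (K * (p - 2))
  have hKp : 0 < K * (p - 2) := mul_pos hK (by linarith)
  have hT : 0 ≤ T := by positivity
  have hdecay := hanti self_mem_Ici hT hT
  have hKT : K * (p - 2) * T = h 0 ^ (2 - p) + 1 := mul_div_cancel₀ _ hKp.ne'
  simp only [hKT, mul_zero, add_zero] at hdecay
  linarith [Real.rpow_pos_of_pos (hpos T hT) (2 - p)]

theorem no_global_solution_equation_superlinear_general
    {V : Type*} (ω : V → V → ℝ)
    (hnonneg : ∀ x y, 0 ≤ ω x y)
    (p : ℝ) (hp : 2 < p)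
    (σ : V → ℝ → ℝ)
    (hσpos : ∀ x t, 0 ≤ t → 0 < σ x t)
    (f : ℝ → ℝ)
    (u0 : V → ℝ)
    (x0 : V) (hx0 : 0 < u0 x0)
    (δ : ℝ) (hδdef : δ = ⨅ t : Set.Ici (0 : ℝ), σ x0 t.1) (hδpos : 0 < δ)
    (ε : ℝ) (hε : 0 < ε)
    (hfgrow : ∀ s, 0 ≤ s → (1 / δ + ε) * s ^ (p - 1) ≤ f s) :
    ¬ ∃ u : V → ℝ → ℝ,
      (∀ x, ContDiffOn ℝ 1 (u x) (Set.Ici 0)) ∧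
      (∀ x t, 0 ≤ t → 0 ≤ u x t) ∧
      (∀ x, u x 0 = u0 x) ∧
      (∀ x t, 0 < t →
        derivWithin (u x) (Set.Ici 0) t - pLap ω p (fun y => u y t) x
          = σ x t * f (u x t)) := by
  rintro ⟨u, hC1, hnn, hinit, heq⟩
  have hσδ : ∀ t, 0 ≤ t → δ ≤ σ x0 t := fun t ht => hδdef ▸
    ciInf_le ⟨0, by rintro _ ⟨s, rfl⟩; exact (hσpos x0 s s.2).le⟩ (⟨t, ht⟩ : Ici (0 : ℝ))
  have hderiv : ∀ t, 0 < t → HasDerivAt (u x0) (derivWithin (u x0) (Ici 0) t) t := by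
    intro t ht
    rw [derivWithin_of_mem_nhds (Ici_mem_nhds ht)]
    exact (((hC1 x0).differentiableOn one_ne_zero).differentiableAt (Ici_mem_nhds ht)).hasDerivAt
  refine false_of_rpow_le_hasDerivAt hp (mul_pos hδpos hε) (hC1 x0).continuousOn (hnn x0)
    (by rwa [hinit]) hderiv fun t ht => ?_
  have hut := hnn x0 t ht.le
  calc δ * ε * u x0 t ^ (p - 1)
      = -u x0 t ^ (p - 1) + δ * ((1 / δ + ε) * u x0 t ^ (p - 1)) := by field_simp; ring
    _ ≤ pLap ω p (fun y => u y t) x0 + σ x0 t * f (u x0 t) :=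
      add_le_add (neg_rpow_le_pLap (hnonneg x0) (by linarith) fun y => hnn y t ht.le)
        (mul_le_mul (hσδ t ht.le) (hfgrow _ hut) (by positivity) (hσpos x0 t ht.le).le)
    _ = derivWithin (u x0) (Ici 0) t := by linarith [heq x0 t ht]

/-- same hypotheses as Statement 0, but for the parabolic *equation*
`u_t - Δ_p u = σ(x,t) f(u)`, `u(·,0) = u0`: it admits no nonnegative solution defined for
all `t ≥ 0` that is `C¹` in time at each vertex. -/
theorem no_global_solution_equation_superlinear
    {V : Type*} (ω : V → V → ℝ)
    (hsymm : ∀ x y, ω x y = ω y x)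
    (hnonneg : ∀ x y, 0 ≤ ω x y)
    (hloop : ∀ x, ω x x = 0)
    (hlf : ∀ x, (Function.support (ω x)).Finite)
    (hconn : ∀ x y, Relation.ReflTransGen (fun a b => 0 < ω a b) x y)
    (p : ℝ) (hp : 2 < p)
    (σ : V → ℝ → ℝ)
    (hσpos : ∀ x t, 0 ≤ t → 0 < σ x t)
    (hσcont : ∀ x, ContinuousOn (σ x) (Set.Ici 0))
    (f : ℝ → ℝ) (hf : LocallyLipschitz f) (hf0 : f 0 = 0)
    (u0 : V → ℝ) (hu0nn : ∀ x, 0 ≤ u0 x) (hu0bd : ∃ M, ∀ x, u0 x ≤ M)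
    (x0 : V) (hx0 : 0 < u0 x0)
    (δ : ℝ) (hδdef : δ = ⨅ t : Set.Ici (0 : ℝ), σ x0 t.1) (hδpos : 0 < δ)
    (ε : ℝ) (hε : 0 < ε)
    (hfgrow : ∀ s, 0 ≤ s → (1 / δ + ε) * s ^ (p - 1) ≤ f s) :
    ¬ ∃ u : V → ℝ → ℝ,
      (∀ x, ContDiffOn ℝ 1 (u x) (Set.Ici 0)) ∧
      (∀ x t, 0 ≤ t → 0 ≤ u x t) ∧
      (∀ x, u x 0 = u0 x) ∧
      (∀ x t, 0 < t →
        derivWithin (u x) (Set.Ici 0) t - pLap ω p (fun y => u y t) x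
          = σ x t * f (u x t)) :=
  no_global_solution_equation_superlinear_general ω hnonneg p hp σ hσpos f u0 x0 hx0 δ hδdef hδpos ε
    hε hfgrow
end
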